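/- A Boolean function f is reflexive (i.e., f(a) = f(ā) for all a) if and only if its characteristic rank is 0. -/
import Mathlib


/-- A Boolean function of arity `n`. -/
abbrev Bf (n : ℕ) := (Fin n → ZMod 2) → ZMod 2

/-- The Zhegalkin coefficient of the monomial `x_S` of `f`, via Möbius inversion. -/
def zCoeff {n : ℕ} (f : Bf n) (S : Finset (Fin n)) : ZMod 2 :=
  ∑ T ∈ S.powerset, f fun i => if i ∈ T then 1 else 0

/-- The set of monomials of the Zhegalkin polynomial of `f`. -/
def monomials {n : ℕ} (f : Bf n) : Finset (Finset (Fin n)) :=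
  Finset.univ.filter fun S => zCoeff f S = 1
/-- The inner negation `f^n(a) = f(ā)`. -/
def innerNeg {n : ℕ} (f : Bf n) : Bf n := fun a => f fun i => a i + 1

/-- The number of monomials of `f` properly containing `S`; the characteristic
`Char(S, f)` is its parity. -/
def charCount {n : ℕ} (f : Bf n) (S : Finset (Fin n)) : ℕ :=
  ((monomials f).filter fun A => S ⊂ A).card

/-- The characteristic rank of `f` is at most `m`: `Char(S, f) = 0` for all
`S` with `|S| ≥ m`. -/
def CharRankLE {n : ℕ} (f : Bf n) (m : ℕ) : Prop :=
  ∀ S : Finset (Fin n), m ≤ S.card → Even (charCount f S)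

/-- indicator vector -/
def ind {n : ℕ} (T : Finset (Fin n)) : Fin n → ZMod 2 := fun i => if i ∈ T then 1 else 0

lemma zmod2_cases (x : ZMod 2) : x = 0 ∨ x = 1 := by revert x; decide

lemma pow_smul_zmod2 (k : ℕ) (hk : k ≠ 0) (x : ZMod 2) : (2 ^ k) • x = 0 := by
  rw [nsmul_eq_mul]
  have : ((2 ^ k : ℕ) : ZMod 2) = 0 := by
    push_cast
    rw [show ((2 : ZMod 2) = 0) by decide, zero_pow hk]
  rw [this, zero_mul]

/-- Möbius inversion over `ZMod 2`. -/
lemma invert {n : ℕ} (g : Finset (Fin n) → ZMod 2) (S : Finset (Fin n)) :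
    ∑ T ∈ S.powerset, ∑ U ∈ T.powerset, g U = g S := by
  have h1 : ∀ T ∈ S.powerset, ∑ U ∈ T.powerset, g U
      = ∑ U ∈ S.powerset, if U ⊆ T then g U else 0 := by
    intro T hT
    rw [← Finset.sum_filter]
    apply Finset.sum_congr _ (fun _ _ => rfl)
    ext U
    simp only [Finset.mem_powerset, Finset.mem_filter]
    exact ⟨fun h => ⟨h.trans (Finset.mem_powerset.mp hT), h⟩, fun h => h.2⟩
  rw [Finset.sum_congr rfl h1, Finset.sum_comm]
  have h2 : ∀ U ∈ S.powerset, (∑ T ∈ S.powerset, if U ⊆ T then g U else 0)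
      = (Finset.Icc U S).card • g U := by
    intro U _
    rw [← Finset.sum_filter, Finset.sum_const, Finset.Icc_eq_filter_powerset]
  rw [Finset.sum_congr rfl h2]
  rw [Finset.sum_eq_single_of_mem S (Finset.mem_powerset_self S)]
  · rw [Finset.Icc_self, Finset.card_singleton, one_nsmul]
  · intro U hU hne
    have hsub : U ⊆ S := Finset.mem_powerset.mp hU
    rw [Finset.card_Icc_finset hsub]
    apply pow_smul_zmod2
    have : U.card < S.card := Finset.card_lt_card (lt_of_le_of_ne hsub hne)
    omega

lemma eval_eq {n : ℕ} (f : Bf n) (S : Finset (Fin n)) :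
    f (ind S) = ∑ T ∈ S.powerset, zCoeff f T := by
  have := invert (fun T => f (ind T)) S
  simp only [zCoeff]
  exact this.symm

/-- Coefficients of the inner negation. -/
lemma zCoeff_innerNeg {n : ℕ} (f : Bf n) (S : Finset (Fin n)) :
    zCoeff (innerNeg f) S
      = zCoeff f S + ∑ A ∈ Finset.univ.filter (fun A => S ⊂ A), zCoeff f A := by
  have hneg : ∀ T : Finset (Fin n), (fun i => ind T i + 1) = ind Tᶜ := by
    intro T
    funext i
    by_cases h : i ∈ T <;> simp [ind, h] <;> decide
  have step1 : zCoeff (innerNeg f) S = ∑ T ∈ S.powerset, ∑ U ∈ (Tᶜ).powerset, zCoeff f U := by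
    unfold zCoeff innerNeg
    apply Finset.sum_congr rfl
    intro T _
    have : (fun i => (if i ∈ T then (1:ZMod 2) else 0) + 1) = ind Tᶜ := hneg T
    rw [show (f fun i => (if i ∈ T then (1:ZMod 2) else 0) + 1) = f (ind Tᶜ) by rw [this]]
    exact eval_eq f Tᶜ
  rw [step1]
  have step2 : ∀ T ∈ S.powerset, ∑ U ∈ (Tᶜ).powerset, zCoeff f U
      = ∑ U ∈ (Finset.univ : Finset (Finset (Fin n))), if U ⊆ Tᶜ then zCoeff f U else 0 := by
    intro T _
    rw [← Finset.sum_filter]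
    apply Finset.sum_congr _ (fun _ _ => rfl)
    ext U
    simp [Finset.mem_powerset]
  rw [Finset.sum_congr rfl step2, Finset.sum_comm]
  have step3 : ∀ U ∈ (Finset.univ : Finset (Finset (Fin n))),
      (∑ T ∈ S.powerset, if U ⊆ Tᶜ then zCoeff f U else 0)
      = if S ⊆ U then zCoeff f U else 0 := by
    intro U _
    rw [← Finset.sum_filter]
    have hfil : S.powerset.filter (fun T => U ⊆ Tᶜ) = (S \ U).powerset := by
      ext T
      simp only [Finset.mem_filter, Finset.mem_powerset, Finset.subset_sdiff]
      constructor
      · rintro ⟨h1, h2⟩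
        exact ⟨h1, Finset.disjoint_left.mpr fun x hxT hxU => by
          have := h2 hxU; simp at this; exact this hxT⟩
      · rintro ⟨h1, h2⟩
        refine ⟨h1, fun x hxU => ?_⟩
        simp only [Finset.mem_compl]
        exact fun hxT => (Finset.disjoint_left.mp h2 hxT) hxU
    rw [hfil, Finset.sum_const, Finset.card_powerset]
    by_cases h : S ⊆ U
    · rw [show (S \ U) = ∅ from Finset.sdiff_eq_empty_iff_subset.mpr h, if_pos h]
      simp
    · rw [if_neg h]
      apply pow_smul_zmod2
      intro hc
      exact h (Finset.sdiff_eq_empty_iff_subset.mp (Finset.card_eq_zero.mp hc))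
  rw [Finset.sum_congr rfl step3, ← Finset.sum_filter]
  have hsplit : (Finset.univ : Finset (Finset (Fin n))).filter (fun U => S ⊆ U)
      = insert S ((Finset.univ : Finset (Finset (Fin n))).filter (fun U => S ⊂ U)) := by
    ext A
    simp only [Finset.mem_filter, Finset.mem_univ, true_and, Finset.mem_insert]
    constructor
    · intro h
      rcases eq_or_ne A S with h' | h'
      · exact Or.inl h'
      · exact Or.inr (lt_of_le_of_ne h (Ne.symm h'))
    · rintro (rfl | h)
      · exact Finset.Subset.refl _
      · exact h.subset
  rw [hsplit, Finset.sum_insert (by simp)]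

lemma charCount_even_iff {n : ℕ} (f : Bf n) (S : Finset (Fin n)) :
    Even (charCount f S) ↔ ∑ A ∈ Finset.univ.filter (fun A => S ⊂ A), zCoeff f A = 0 := by
  set F := (Finset.univ : Finset (Finset (Fin n))).filter (fun A => S ⊂ A) with hF
  have h1 : ∑ A ∈ F, zCoeff f A = ∑ A ∈ F.filter (fun A => zCoeff f A = 1), zCoeff f A :=
    (Finset.sum_filter_of_ne (fun x _ hx => (zmod2_cases _).resolve_left hx)).symm
  have h2 : ∑ A ∈ F.filter (fun A => zCoeff f A = 1), zCoeff f A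
      = ((F.filter (fun A => zCoeff f A = 1)).card : ZMod 2) := by
    rw [Finset.sum_congr rfl (fun A hA => (Finset.mem_filter.mp hA).2),
      Finset.sum_const, nsmul_eq_mul, mul_one]
  have h3 : charCount f S = (F.filter (fun A => zCoeff f A = 1)).card := by
    unfold charCount monomials
    rw [hF, Finset.filter_filter, Finset.filter_filter]
    congr 1
    ext A
    simp [and_comm]
  rw [h1, h2, ← h3, ZMod.natCast_eq_zero_iff]
  exact even_iff_two_dvd

lemma zCoeff_ext {n : ℕ} (f g : Bf n) (h : ∀ S, zCoeff f S = zCoeff g S) : f = g := by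
  funext a
  have ha : a = ind (Finset.univ.filter (fun i => a i = 1)) := by
    funext i
    simp only [ind, Finset.mem_filter, Finset.mem_univ, true_and]
    rcases zmod2_cases (a i) with h' | h' <;> simp [h']
  rw [ha, eval_eq f, eval_eq g]
  exact Finset.sum_congr rfl fun T _ => h T

/-- A Boolean function is reflexive iff its characteristic rank is `0`. -/
theorem reflexive_iff_charRank_zero {n : ℕ} (f : Bf n) :
    (∀ a, f (fun i => a i + 1) = f a) ↔ CharRankLE f 0 := by
  constructor
  · intro h S _
    rw [charCount_even_iff]
    have : zCoeff (innerNeg f) S = zCoeff f S := by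
      unfold zCoeff innerNeg
      apply Finset.sum_congr rfl
      intro T _
      exact h _
    rw [zCoeff_innerNeg] at this
    exact (left_eq_add.mp this.symm)
  · intro h a
    have heq : innerNeg f = f := by
      apply zCoeff_ext
      intro S
      rw [zCoeff_innerNeg, (charCount_even_iff f S).mp (h S (Nat.zero_le _)), add_zero]
    exact congrFun heq a
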